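/- arXiv:0911.2455 — 17 statements merged into one kernel-verified Lean document; each statement's English description precedes it below -/
import Mathlib

section
/- Let q and c be positive integers and set k = c(q+1) + q². Then c divides k(k+c−1) if and only if c divides q⁴ − q²; moreover, when c divides q⁴ − q², the integers k(k+c−1)/c and (q⁴ − q²)/c have opposite parity (i.e., their sum is odd). (Explicitly, k(k+c−1)/c = c(q+1)(q+2) + (2q+1)(q²+q−1) + (q⁴−q²)/c, where the first summand is even and the second is odd.) -/
/-- **Lemma 1.**  For positive integers `q, c` and `k = c(q+1) + q²`,
`c` divides `k(k+c-1)` iff `c` divides `q⁴ - q²`; and in that case the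
integers `k(k+c-1)/c` and `(q⁴ - q²)/c` have opposite parity (their sum is odd). -/
theorem srnt_lemma1 (q c : ℤ) (hq : 0 < q) (hc : 0 < c)
    (k : ℤ) (hk : k = c * (q + 1) + q ^ 2) :
    (c ∣ k * (k + c - 1) ↔ c ∣ q ^ 4 - q ^ 2) ∧
    (c ∣ q ^ 4 - q ^ 2 → Odd (k * (k + c - 1) / c + (q ^ 4 - q ^ 2) / c)) := by
  have hc0 : c ≠ 0 := hc.ne'
  set M : ℤ := c * (q + 1) * (q + 2) + (2 * q + 1) * (q ^ 2 + q - 1) with hM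
  have key : k * (k + c - 1) = c * M + (q ^ 4 - q ^ 2) := by
    subst hk; rw [hM]; ring
  constructor
  · rw [key]
    exact dvd_add_right (Dvd.intro M rfl)
  · intro hd
    obtain ⟨e, he⟩ := hd
    have h1 : k * (k + c - 1) = c * (M + e) := by rw [key, he]; ring
    have h2 : k * (k + c - 1) / c = M + e := by
      rw [h1, Int.mul_ediv_cancel_left _ hc0]
    have h3 : (q ^ 4 - q ^ 2) / c = e := by
      rw [he, Int.mul_ediv_cancel_left _ hc0]
    rw [h2, h3]
    obtain ⟨a, ha⟩ := Int.even_mul_succ_self (q + 1)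
    obtain ⟨b, hb⟩ := Int.even_mul_succ_self q
    refine ⟨c * a + (2 * q + 1) * b - q + e - 1, ?_⟩
    have : (q + 1) * (q + 2) = a + a := by rw [← ha]; ring
    have hb' : q ^ 2 + q = b + b := by rw [← hb]; ring
    rw [hM]
    nlinarith [this, hb']
end

section
/- Let q and c be positive integers and set k = c(q+1) + q² and s = c + 2q. Then s divides k(k+c−3) if and only if s divides q(q+1)(q+2)(q+3); moreover, when s divides q(q+1)(q+2)(q+3), the integers k(k+c−3)/s and q(q+1)(q+2)(q+3)/(c+2q) have opposite parity (i.e., their sum is odd). (Explicitly, k(k+c−3)/s = c(q+1)(q+2) − (3q²+7q+3) + q(q+1)(q+2)(q+3)/(c+2q).) -/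
/-- **Lemma 2.**  For positive integers `q, c`, `k = c(q+1) + q²` and `s = c + 2q`,
`s` divides `k(k+c-3)` iff `s` divides `q(q+1)(q+2)(q+3)`; and in that case the
integers `k(k+c-3)/s` and `q(q+1)(q+2)(q+3)/(c+2q)` have opposite parity
(their sum is odd). -/
theorem srnt_lemma2 (q c : ℤ) (hq : 0 < q) (hc : 0 < c)
    (k s : ℤ) (hk : k = c * (q + 1) + q ^ 2) (hs : s = c + 2 * q) :
    (s ∣ k * (k + c - 3) ↔ s ∣ q * (q + 1) * (q + 2) * (q + 3)) ∧
    (s ∣ q * (q + 1) * (q + 2) * (q + 3) →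
      Odd (k * (k + c - 3) / s + q * (q + 1) * (q + 2) * (q + 3) / (c + 2 * q))) := by
  have hspos : 0 < s := by omega
  set A : ℤ := c * (q + 1) * (q + 2) - (3 * q ^ 2 + 7 * q + 3) with hA
  have key : k * (k + c - 3) = s * A + q * (q + 1) * (q + 2) * (q + 3) := by
    subst hk hs; rw [hA]; ring
  have hAodd : Odd A := by
    obtain ⟨m, hm⟩ := Int.even_mul_succ_self (q + 1)
    obtain ⟨n, hn⟩ := Int.even_mul_succ_self q
    refine ⟨c * m - 3 * n - 2 * q - 2, ?_⟩
    have h2 : (q + 1) * (q + 2) = m + m := by linear_combination hm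
    have h3 : q * (q + 1) = n + n := by linear_combination hn
    rw [hA]
    linear_combination c * h2 - 3 * h3
  constructor
  · rw [key]
    exact (Int.dvd_add_right ⟨A, rfl⟩)
  · intro hT
    obtain ⟨t, ht⟩ := hT
    have h1 : k * (k + c - 3) / s = A + t := by
      rw [key, ht, show s * A + s * t = s * (A + t) by ring,
        Int.mul_ediv_cancel_left _ (ne_of_gt hspos)]
    have h2 : q * (q + 1) * (q + 2) * (q + 3) / (c + 2 * q) = t := by
      rw [← hs, ht, Int.mul_ediv_cancel_left _ (ne_of_gt hspos)]
    rw [h1, h2, show A + t + t = A + 2 * t by ring]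
    exact hAodd.add_even ⟨t, two_mul t⟩
end

section
/- Let q and c be positive integers with 1 ≤ c ≤ q(q+1), and set k = c(q+1) + q² and s = c + 2q. Then the rational numbers m₁ = (k/(2cs))·((k−1+c)(s+c) − 2c) and m₂ = (k/(2cs))·((k−1+c)(s−c) + 2c) are both integers if and only if the rational numbers α = (q⁴ − q²)/c and β = q(q+1)(q+2)(q+3)/(c+2q) are both integers and have the same parity. -/
/-- **Theorem 1.**  For positive integers `q, c` with `1 ≤ c ≤ q(q+1)`,
`k = c(q+1) + q²`, `s = c + 2q`, the multiplicities
`m₁ = (k/(2cs))((k-1+c)(s+c) - 2c)` and `m₂ = (k/(2cs))((k-1+c)(s-c) + 2c)`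
are both integers iff `α = (q⁴-q²)/c` and `β = q(q+1)(q+2)(q+3)/(c+2q)` are
integers of the same parity. -/
theorem srnt_theorem1 (q c : ℤ) (hq : 0 < q) (hc1 : 1 ≤ c) (hc2 : c ≤ q * (q + 1))
    (k s m₁ m₂ : ℚ)
    (hk : k = c * (q + 1) + q ^ 2) (hs : s = c + 2 * q)
    (hm1 : m₁ = k / (2 * c * s) * ((k - 1 + c) * (s + c) - 2 * c))
    (hm2 : m₂ = k / (2 * c * s) * ((k - 1 + c) * (s - c) + 2 * c)) :
    ((∃ a : ℤ, m₁ = a) ∧ (∃ b : ℤ, m₂ = b)) ↔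
      (∃ A B : ℤ, ((q : ℚ) ^ 4 - (q : ℚ) ^ 2) / c = A ∧
        ((q : ℚ) * (q + 1) * (q + 2) * (q + 3)) / (c + 2 * q) = B ∧
        A % 2 = B % 2) := by
  have hc0 : (c : ℚ) ≠ 0 := Int.cast_ne_zero.mpr (by omega)
  have hs0 : (c : ℚ) + 2 * q ≠ 0 := by
    have h : (0 : ℤ) < c + 2 * q := by omega
    have h' : (0 : ℚ) < ((c + 2 * q : ℤ) : ℚ) := by exact_mod_cast h
    push_cast at h'
    linarith
  set N1 : ℤ := c * (q + 1) * (q + 2) + (q + 1) * (q ^ 2 - 1) + q ^ 2 * (q + 2) with hN1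
  set N2 : ℤ := (c + 2 * q) * (q + 1) * (q + 2) - (q + 1) ^ 2 * (q + 3) - q * (q + 2) ^ 2
    with hN2
  have hNd : N1 - N2 = 2 * (q + 1) ^ 3 := by rw [hN1, hN2]; ring
  have hI1 : m₁ + m₂ = (N1 : ℚ) + ((q : ℚ) ^ 4 - (q : ℚ) ^ 2) / c := by
    subst hk hs hm1 hm2
    rw [hN1]
    push_cast
    field_simp
    ring
  have hI2 : m₁ - m₂ = (N2 : ℚ) + ((q : ℚ) * (q + 1) * (q + 2) * (q + 3)) / (c + 2 * q) := by
    subst hk hs hm1 hm2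
    rw [hN2]
    push_cast
    field_simp
    ring
  constructor
  · rintro ⟨⟨a, ha⟩, ⟨b, hb⟩⟩
    refine ⟨a + b - N1, a - b - N2, ?_, ?_, ?_⟩
    · rw [ha, hb] at hI1
      push_cast
      linarith
    · rw [ha, hb] at hI2
      push_cast
      linarith
    · obtain ⟨u, hu⟩ : ∃ u, N1 - N2 = 2 * u := ⟨(q + 1) ^ 3, hNd⟩
      omega
  · rintro ⟨A, B, hA, hB, hpar⟩
    obtain ⟨t, ht⟩ : ∃ t, A = B + 2 * t := ⟨(A - B) / 2, by omega⟩
    have h1 : (A : ℚ) = (B : ℚ) + 2 * (t : ℚ) := by exact_mod_cast ht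
    have hNd' : (N1 : ℚ) = (N2 : ℚ) + 2 * ((q : ℚ) + 1) ^ 3 := by
      have h : N1 = N2 + 2 * (q + 1) ^ 3 := by linarith [hNd]
      exact_mod_cast h
    rw [hA] at hI1
    rw [hB] at hI2
    refine ⟨⟨(q + 1) ^ 3 + N2 + B + t, ?_⟩, ⟨(q + 1) ^ 3 + t, ?_⟩⟩
    · push_cast
      linarith
    · push_cast
      linarith
end

section
/- Let c be a positive integer with c ∉ {2,4,6} and let q be a positive integer such that c + 2q divides q(q+1)(q+2)(q+3). Then q ≤ c(h−1)/2, where h = |(c−2)(c−4)(c−6)|. In particular, for each such c there are only finitely many q for which the pair (q,c) is feasible. -/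
/-- A pair `(q, c)` of positive integers is *feasible* for an SRNT graph if
`1 ≤ c ≤ q(q+1)`, `c` divides `q⁴ - q²`, `c + 2q` divides `q(q+1)(q+2)(q+3)`,
and the integers `α = (q⁴ - q²)/c` and `β = q(q+1)(q+2)(q+3)/(c+2q)` have the
same parity. -/
def Feasible (q c : ℤ) : Prop :=
  0 < q ∧ 1 ≤ c ∧ c ≤ q * (q + 1) ∧
  c ∣ q ^ 4 - q ^ 2 ∧
  (c + 2 * q) ∣ q * (q + 1) * (q + 2) * (q + 3) ∧
  ((q ^ 4 - q ^ 2) / c) % 2 = (q * (q + 1) * (q + 2) * (q + 3) / (c + 2 * q)) % 2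

/-- **Theorem 2 (finiteness part).**  If `c ∉ {2,4,6}` is a positive integer and
`q` is a positive integer with `c + 2q` dividing `q(q+1)(q+2)(q+3)`, then
`q ≤ c(h-1)/2` where `h = |(c-2)(c-4)(c-6)|`; in particular only finitely many
`q` make `(q, c)` feasible. -/
theorem srnt_theorem2_finiteness (c : ℤ) (hc : 0 < c)
    (hc2 : c ≠ 2) (hc4 : c ≠ 4) (hc6 : c ≠ 6)
    (h : ℤ) (hh : h = |(c - 2) * (c - 4) * (c - 6)|) :
    (∀ q : ℤ, 0 < q → (c + 2 * q) ∣ q * (q + 1) * (q + 2) * (q + 3) →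
      2 * q ≤ c * (h - 1)) ∧
    {q : ℤ | Feasible q c}.Finite := by
  have key : ∀ q : ℤ, 0 < q → (c + 2 * q) ∣ q * (q + 1) * (q + 2) * (q + 3) →
      2 * q ≤ c * (h - 1) := by
    intro q hq hdvd
    have hd : (c + 2 * q) ∣ c * (c - 2) * (c - 4) * (c - 6) := by
      have h1 : c * (c - 2) * (c - 4) * (c - 6)
          = 16 * (q * (q + 1) * (q + 2) * (q + 3))
            + (c + 2 * q) * ((c - 2 * q - 6) * (c ^ 2 - 6 * c + 8 + 12 * q + 4 * q ^ 2)) := by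
        ring
      rw [h1]
      exact dvd_add (hdvd.mul_left 16) (Dvd.intro _ rfl)
    have hne : c * (c - 2) * (c - 4) * (c - 6) ≠ 0 :=
      mul_ne_zero (mul_ne_zero (mul_ne_zero hc.ne' (sub_ne_zero.mpr hc2))
        (sub_ne_zero.mpr hc4)) (sub_ne_zero.mpr hc6)
    have habs : |c * (c - 2) * (c - 4) * (c - 6)| = c * h := by
      rw [show c * (c - 2) * (c - 4) * (c - 6) = c * ((c - 2) * (c - 4) * (c - 6)) from by ring,
        abs_mul, abs_of_pos hc, hh]
    have hle : c + 2 * q ≤ |c * (c - 2) * (c - 4) * (c - 6)| :=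
      Int.le_of_dvd (abs_pos.mpr hne) ((dvd_abs _ _).mpr hd)
    rw [habs] at hle
    linarith
  refine ⟨key, ?_⟩
  apply Set.Finite.subset (Set.finite_Icc 1 (c * (h - 1)))
  intro q hq
  obtain ⟨hq0, _, _, _, hdvd, _⟩ := hq
  have := key q hq0 hdvd
  constructor <;> linarith
end

section
/- Let c be an odd positive integer, let h = |(c−2)(c−4)(c−6)|, and set q_m = c(h−1)/2. Then the pair (q_m, c) is feasible. -/
lemma abs_sub_two_mul_sub_four_mul_sub_six_ne_one (c : ℤ) : |(c - 2) * (c - 4) * (c - 6)| ≠ 1 := by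
  intro h
  obtain ⟨h24, h6⟩ := IsUnit.mul_iff.mp (Int.isUnit_iff_abs_eq.mpr h)
  have h2 := (IsUnit.mul_iff.mp h24).1
  rcases Int.isUnit_iff.mp h2, Int.isUnit_iff.mp h6 with ⟨_ | _, _ | _⟩ <;> omega

lemma Int.even_ediv_of_odd {n x : ℤ} (hn : Odd n) (hdvd : n ∣ x) (hx : Even x) :
    Even (x / n) := by
  obtain ⟨b, rfl⟩ := hdvd
  rw [Int.mul_ediv_cancel_left _ (by rintro rfl; simp at hn)]
  exact (Int.even_mul.mp hx).resolve_left (Int.not_even_iff_odd.mpr hn)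

lemma dvd_four_consecutive_of_odd {n q c : ℤ} (hn : Odd n) (hqc : n ∣ 2 * q + c)
    (hc : n ∣ c * (c - 2) * (c - 4) * (c - 6)) : n ∣ q * (q + 1) * (q + 2) * (q + 3) := by
  have hmod : 2 * q ≡ -c [ZMOD n] :=
    Int.modEq_iff_dvd.mpr (by rw [show -c - 2 * q = -(2 * q + c) by ring]; exact hqc.neg_right)
  have h16 : 16 * (q * (q + 1) * (q + 2) * (q + 3)) ≡ 0 [ZMOD n] :=
    calc 16 * (q * (q + 1) * (q + 2) * (q + 3))
        = 2 * q * (2 * q + 2) * (2 * q + 4) * (2 * q + 6) := by ring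
      _ ≡ -c * (-c + 2) * (-c + 4) * (-c + 6) [ZMOD n] := by gcongr
      _ = c * (c - 2) * (c - 4) * (c - 6) := by ring
      _ ≡ 0 [ZMOD n] := Int.modEq_zero_iff_dvd.mpr hc
  have hcop : IsCoprime n 16 := by
    simpa using (Int.isCoprime_two_right.mpr hn).pow_right (n := 4)
  exact hcop.dvd_of_dvd_mul_left (Int.modEq_zero_iff_dvd.mp h16)

lemma feasible_mul_of_dvd (c k : ℤ) (hc : 0 < c) (hodd : Odd c) (hk : 0 < k)
    (hdvd : 2 * k + 1 ∣ (c - 2) * (c - 4) * (c - 6)) : Feasible (c * k) c := by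
  set q := c * k
  have hq : 0 < q := mul_pos hc hk
  have hsum : c + 2 * q = c * (2 * k + 1) := by ring
  have hsum_odd : Odd (c * (2 * k + 1)) := hodd.mul (odd_two_mul_add_one k)
  have hα : c ∣ q ^ 4 - q ^ 2 := Dvd.intro (k * (q ^ 3 - q)) (by ring)
  have hβ : c * (2 * k + 1) ∣ q * (q + 1) * (q + 2) * (q + 3) :=
    dvd_four_consecutive_of_odd hsum_odd ⟨1, by ring⟩
      (by rw [mul_assoc c, mul_assoc c]; exact mul_dvd_mul_left c hdvd)
  have hα_even : Even (q ^ 4 - q ^ 2) := by simp [Int.even_sub, Int.even_pow]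
  have hβ_even : Even (q * (q + 1) * (q + 2) * (q + 3)) :=
    ((Int.even_mul_succ_self q).mul_right _).mul_right _
  refine ⟨hq, hc, by nlinarith, hα, hsum ▸ hβ, ?_⟩
  rw [hsum, Int.even_iff.mp (Int.even_ediv_of_odd hodd hα hα_even),
    Int.even_iff.mp (Int.even_ediv_of_odd hsum_odd hβ hβ_even)]

/-- **Theorem 2 (odd case).**  If `c` is an odd positive integer,
`h = |(c-2)(c-4)(c-6)|` and `q_m = c(h-1)/2`, then `(q_m, c)` is feasible. -/
theorem srnt_theorem2_odd (c : ℤ) (hc : 0 < c) (hodd : Odd c)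
    (h qm : ℤ) (hh : h = |(c - 2) * (c - 4) * (c - 6)|)
    (hqm : 2 * qm = c * (h - 1)) :
    Feasible qm c := by
  have hD_odd : Odd ((c - 2) * (c - 4) * (c - 6)) :=
    ((hodd.sub_even even_two).mul (hodd.sub_even (by decide))).mul (hodd.sub_even (by decide))
  obtain ⟨k, hk⟩ : Odd h := hh ▸ odd_abs.mpr hD_odd
  have hk_pos : 0 < k := by
    have := abs_sub_two_mul_sub_four_mul_sub_six_ne_one c
    have := abs_nonneg ((c - 2) * (c - 4) * (c - 6))
    omega
  obtain rfl : qm = c * k := by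
    have : 2 * qm = 2 * (c * k) := by rw [hqm, hk]; ring
    omega
  exact feasible_mul_of_dvd c k hc hodd hk_pos (hk ▸ hh ▸ abs_dvd_self _)
end

section
/- For c ∈ {2,4,6} and any integer q with c ≤ q(q+1), the pair (q,c) is feasible, with exactly two classes of exceptions: (q,2) is not feasible when q ≡ 3 (mod 4), and (q,6) is not feasible when q ≡ 1 (mod 4). That is: (q,2) is feasible iff q ≥ 1 and q ≢ 3 (mod 4); (q,4) is feasible for all q ≥ 2; (q,6) is feasible iff q ≥ 2 and q ≢ 1 (mod 4). -/
lemma feas2 (q : ℤ) : Feasible q 2 ↔ 1 ≤ q ∧ q % 4 ≠ 3 := by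
  constructor
  · rintro ⟨hq0, -, hle, hA, hB, hpar⟩
    refine ⟨by omega, ?_⟩
    intro h3
    obtain ⟨a, ha⟩ := hA
    obtain ⟨b, hb⟩ := hB
    rw [ha, Int.mul_ediv_cancel_left _ (by norm_num : (2:ℤ) ≠ 0), hb,
      Int.mul_ediv_cancel_left _ (by omega : (2 + 2*q:ℤ) ≠ 0)] at hpar
    have h2b : 2 * b = q*(q+2)*(q+3) := by
      apply mul_left_cancel₀ (show (q+1:ℤ) ≠ 0 by omega)
      linear_combination -hb
    have hm : q % 4 ≡ q [ZMOD 4] := Int.emod_emod_of_dvd q dvd_rfl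
    have hmod' : ((q%4)^4 - (q%4)^2 - (q%4)*((q%4)+2)*((q%4)+3)) % 4 = (2*a - 2*b) % 4 := by
      have hF : q^4 - q^2 - q*(q+2)*(q+3) = 2*a - 2*b := by linear_combination ha + h2b
      rw [← hF]
      exact ((hm.pow 4).sub (hm.pow 2)).sub ((hm.mul (hm.add_right 2)).mul (hm.add_right 3))
    rw [h3] at hmod'
    norm_num at hmod'
    omega
  · rintro ⟨hq, h3⟩
    obtain ⟨t, ht⟩ : ∃ t, q*(q+2)*(q+3) = 2*t := by
      rcases Int.even_or_odd q with ⟨k, hk⟩ | ⟨k, hk⟩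
      · exact ⟨k*(q+2)*(q+3), by rw [hk]; ring⟩
      · exact ⟨q*(q+2)*(k+2), by rw [hk]; ring⟩
    have hA : (2:ℤ) ∣ q^4 - q^2 := by
      have hm : q % 2 ≡ q [ZMOD 2] := Int.emod_emod_of_dvd q dvd_rfl
      have h2 : ((q%2)^4 - (q%2)^2) % 2 = (q^4 - q^2) % 2 := (hm.pow 4).sub (hm.pow 2)
      rw [Int.dvd_iff_emod_eq_zero, ← h2]
      have hr : q % 2 = 0 ∨ q % 2 = 1 := by omega
      rcases hr with h | h <;> rw [h] <;> norm_num
    have hB : (2 + 2*q:ℤ) ∣ q*(q+1)*(q+2)*(q+3) := ⟨t, by linear_combination (q+1)*ht⟩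
    refine ⟨by omega, by norm_num, by nlinarith, hA, hB, ?_⟩
    obtain ⟨a, ha⟩ := hA
    obtain ⟨b, hb⟩ := hB
    rw [ha, Int.mul_ediv_cancel_left _ (by norm_num : (2:ℤ) ≠ 0), hb,
      Int.mul_ediv_cancel_left _ (by omega : (2 + 2*q:ℤ) ≠ 0)]
    have h2b : 2 * b = q*(q+2)*(q+3) := by
      apply mul_left_cancel₀ (show (q+1:ℤ) ≠ 0 by omega)
      linear_combination -hb
    have hm : q % 4 ≡ q [ZMOD 4] := Int.emod_emod_of_dvd q dvd_rfl
    have hmod' : ((q%4)^4 - (q%4)^2 - (q%4)*((q%4)+2)*((q%4)+3)) % 4 = (2*a - 2*b) % 4 := by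
      have hF : q^4 - q^2 - q*(q+2)*(q+3) = 2*a - 2*b := by linear_combination ha + h2b
      rw [← hF]
      exact ((hm.pow 4).sub (hm.pow 2)).sub ((hm.mul (hm.add_right 2)).mul (hm.add_right 3))
    have hr : q % 4 = 0 ∨ q % 4 = 1 ∨ q % 4 = 2 := by omega
    rcases hr with h | h | h <;> rw [h] at hmod' <;> norm_num at hmod' <;> omega

lemma feas4 (q : ℤ) : Feasible q 4 ↔ 2 ≤ q := by
  constructor
  · rintro ⟨hq0, -, hle, -, -, -⟩
    by_contra h
    have hq1 : q = 1 := by omega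
    rw [hq1] at hle; norm_num at hle
  · intro hq
    have hA : (4:ℤ) ∣ q^4 - q^2 := by
      have hm : q % 4 ≡ q [ZMOD 4] := Int.emod_emod_of_dvd q dvd_rfl
      have h2 : ((q%4)^4 - (q%4)^2) % 4 = (q^4 - q^2) % 4 := (hm.pow 4).sub (hm.pow 2)
      rw [Int.dvd_iff_emod_eq_zero, ← h2]
      have hr : q % 4 = 0 ∨ q % 4 = 1 ∨ q % 4 = 2 ∨ q % 4 = 3 := by omega
      rcases hr with h | h | h | h <;> rw [h] <;> norm_num
    obtain ⟨t, ht⟩ := Int.even_mul_succ_self q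
    have hB : (4 + 2*q:ℤ) ∣ q*(q+1)*(q+2)*(q+3) :=
      ⟨t*(q+3), by linear_combination (q+2)*(q+3)*ht⟩
    refine ⟨by omega, by norm_num, by nlinarith, hA, hB, ?_⟩
    obtain ⟨a, ha⟩ := hA
    obtain ⟨b, hb⟩ := hB
    rw [ha, Int.mul_ediv_cancel_left _ (by norm_num : (4:ℤ) ≠ 0), hb,
      Int.mul_ediv_cancel_left _ (by omega : (4 + 2*q:ℤ) ≠ 0)]
    have h2b : 2 * b = q*(q+1)*(q+3) := by
      apply mul_left_cancel₀ (show (q+2:ℤ) ≠ 0 by omega)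
      linear_combination -hb
    have hm : q % 8 ≡ q [ZMOD 8] := Int.emod_emod_of_dvd q dvd_rfl
    have hmod' : ((q%8)^4 - (q%8)^2 - 2*((q%8)*((q%8)+1)*((q%8)+3))) % 8 = (4*a - 4*b) % 8 := by
      have hF : q^4 - q^2 - 2*(q*(q+1)*(q+3)) = 4*a - 4*b := by linear_combination ha + 2*h2b
      rw [← hF]
      exact ((hm.pow 4).sub (hm.pow 2)).sub
        (((hm.mul (hm.add_right 1)).mul (hm.add_right 3)).mul_left 2)
    have hr : q % 8 = 0 ∨ q % 8 = 1 ∨ q % 8 = 2 ∨ q % 8 = 3 ∨ q % 8 = 4 ∨ q % 8 = 5 ∨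
        q % 8 = 6 ∨ q % 8 = 7 := by omega
    rcases hr with h | h | h | h | h | h | h | h <;> rw [h] at hmod' <;>
      norm_num at hmod' <;> omega

lemma feas6 (q : ℤ) : Feasible q 6 ↔ 2 ≤ q ∧ q % 4 ≠ 1 := by
  constructor
  · rintro ⟨hq0, -, hle, hA, hB, hpar⟩
    have hq2 : 2 ≤ q := by
      by_contra h
      have hq1 : q = 1 := by omega
      rw [hq1] at hle; norm_num at hle
    refine ⟨hq2, ?_⟩
    intro h1
    obtain ⟨a, ha⟩ := hA
    obtain ⟨b, hb⟩ := hB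
    rw [ha, Int.mul_ediv_cancel_left _ (by norm_num : (6:ℤ) ≠ 0), hb,
      Int.mul_ediv_cancel_left _ (by omega : (6 + 2*q:ℤ) ≠ 0)] at hpar
    have h2b : 2 * b = q*(q+1)*(q+2) := by
      apply mul_left_cancel₀ (show (q+3:ℤ) ≠ 0 by omega)
      linear_combination -hb
    have hm : q % 12 ≡ q [ZMOD 12] := Int.emod_emod_of_dvd q dvd_rfl
    have hmod' : ((q%12)^4 - (q%12)^2 - 3*((q%12)*((q%12)+1)*((q%12)+2))) % 12
        = (6*a - 6*b) % 12 := by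
      have hF : q^4 - q^2 - 3*(q*(q+1)*(q+2)) = 6*a - 6*b := by linear_combination ha + 3*h2b
      rw [← hF]
      exact ((hm.pow 4).sub (hm.pow 2)).sub
        (((hm.mul (hm.add_right 1)).mul (hm.add_right 2)).mul_left 3)
    have hr : q % 12 = 1 ∨ q % 12 = 5 ∨ q % 12 = 9 := by omega
    rcases hr with h | h | h <;> rw [h] at hmod' <;> norm_num at hmod' <;> omega
  · rintro ⟨hq, h1⟩
    have hA : (6:ℤ) ∣ q^4 - q^2 := by
      have hm : q % 6 ≡ q [ZMOD 6] := Int.emod_emod_of_dvd q dvd_rfl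
      have h2 : ((q%6)^4 - (q%6)^2) % 6 = (q^4 - q^2) % 6 := (hm.pow 4).sub (hm.pow 2)
      rw [Int.dvd_iff_emod_eq_zero, ← h2]
      have hr : q % 6 = 0 ∨ q % 6 = 1 ∨ q % 6 = 2 ∨ q % 6 = 3 ∨ q % 6 = 4 ∨ q % 6 = 5 := by
        omega
      rcases hr with h | h | h | h | h | h <;> rw [h] <;> norm_num
    obtain ⟨t, ht⟩ := Int.even_mul_succ_self q
    have hB : (6 + 2*q:ℤ) ∣ q*(q+1)*(q+2)*(q+3) :=
      ⟨t*(q+2), by linear_combination (q+2)*(q+3)*ht⟩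
    refine ⟨by omega, by norm_num, by nlinarith, hA, hB, ?_⟩
    obtain ⟨a, ha⟩ := hA
    obtain ⟨b, hb⟩ := hB
    rw [ha, Int.mul_ediv_cancel_left _ (by norm_num : (6:ℤ) ≠ 0), hb,
      Int.mul_ediv_cancel_left _ (by omega : (6 + 2*q:ℤ) ≠ 0)]
    have h2b : 2 * b = q*(q+1)*(q+2) := by
      apply mul_left_cancel₀ (show (q+3:ℤ) ≠ 0 by omega)
      linear_combination -hb
    have hm : q % 12 ≡ q [ZMOD 12] := Int.emod_emod_of_dvd q dvd_rfl
    have hmod' : ((q%12)^4 - (q%12)^2 - 3*((q%12)*((q%12)+1)*((q%12)+2))) % 12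
        = (6*a - 6*b) % 12 := by
      have hF : q^4 - q^2 - 3*(q*(q+1)*(q+2)) = 6*a - 6*b := by linear_combination ha + 3*h2b
      rw [← hF]
      exact ((hm.pow 4).sub (hm.pow 2)).sub
        (((hm.mul (hm.add_right 1)).mul (hm.add_right 2)).mul_left 3)
    have hr : q % 12 = 0 ∨ q % 12 = 2 ∨ q % 12 = 3 ∨ q % 12 = 4 ∨ q % 12 = 6 ∨ q % 12 = 7 ∨
        q % 12 = 8 ∨ q % 12 = 10 ∨ q % 12 = 11 := by omega
    rcases hr with h | h | h | h | h | h | h | h | h <;> rw [h] at hmod' <;>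
      norm_num at hmod' <;> omega

/-- **Theorem 3.**  `(q,2)` is feasible iff `q ≥ 1` and `q ≢ 3 (mod 4)`;
`(q,4)` is feasible iff `q ≥ 2`; `(q,6)` is feasible iff `q ≥ 2` and
`q ≢ 1 (mod 4)`. -/
theorem srnt_theorem3 (q : ℤ) :
    (Feasible q 2 ↔ 1 ≤ q ∧ q % 4 ≠ 3) ∧
    (Feasible q 4 ↔ 2 ≤ q) ∧
    (Feasible q 6 ↔ 2 ≤ q ∧ q % 4 ≠ 1) := by
  exact ⟨feas2 q, feas4 q, feas6 q⟩
end

section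
/- Let b and c be positive integers such that c is congruent to 2, 4, or 6 modulo 2b+1 (i.e., c = (2b+1)f + 2e for some nonnegative integer f and some e ∈ {1,2,3}). Then the pair (q,c) with q = bc is feasible. -/
/-- **Theorem 4(1).**  For positive integers `b` and `c` with
`c = (2b+1)f + 2e` for some nonnegative `f` and `e ∈ {1,2,3}`,
the pair `(bc, c)` is feasible. -/
theorem srnt_theorem4_part1 (b c : ℤ) (hb : 0 < b) (hc : 0 < c)
    (hcong : ∃ f e : ℤ, 0 ≤ f ∧ (e = 1 ∨ e = 2 ∨ e = 3) ∧
      c = (2 * b + 1) * f + 2 * e) :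
    Feasible (b * c) c := by
  obtain ⟨f, e, hf, he, hce⟩ := hcong
  have key : 2 * (b * c + e) = (2 * b + 1) * (c - f) := by linear_combination -hce
  have hev : Even (c - f) := by
    rcases Int.even_mul.1 (⟨b * c + e, by linarith⟩ : Even ((2 * b + 1) * (c - f))) with h | h
    · obtain ⟨k, hk⟩ := h; omega
    · exact h
  obtain ⟨g, hg⟩ := hev
  have hbe : b * c + e = (2 * b + 1) * g :=
    mul_left_cancel₀ two_ne_zero (by linear_combination key + (2 * b + 1) * hg)
  have hcne : c ≠ 0 := hc.ne'
  have hdne : c + 2 * (b * c) ≠ 0 := by positivity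
  have hα : ((b * c) ^ 4 - (b * c) ^ 2) / c
      = b * (b * c + 1) * ((b * c - 1) * (b * c - 1 + 1)) := by
    rw [show (b * c) ^ 4 - (b * c) ^ 2
        = c * (b * (b * c + 1) * ((b * c - 1) * (b * c - 1 + 1))) from by ring,
      Int.mul_ediv_cancel_left _ hcne]
  have hαe : Even (((b * c) ^ 4 - (b * c) ^ 2) / c) := by
    rw [hα]; exact (Int.even_mul_succ_self (b * c - 1)).mul_left _
  obtain ⟨w, hw, hwe⟩ : ∃ w, b * c * (b * c + 1) * (b * c + 2) * (b * c + 3)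
      = (c + 2 * (b * c)) * w ∧ Even w := by
    rcases he with rfl | rfl | rfl
    · refine ⟨b * g * ((b * c + 2) * (b * c + 3)),
        by linear_combination (b * c * (b * c + 2) * (b * c + 3)) * hbe, ?_⟩
      obtain ⟨k, hk⟩ := Int.even_mul_succ_self (b * c + 2)
      exact ⟨b * g * k, by linear_combination (b * g) * hk⟩
    · refine ⟨b * g * ((b * c + 1) * (b * c + 3)),
        by linear_combination (b * c * (b * c + 1) * (b * c + 3)) * hbe, ?_⟩
      obtain ⟨k, hk⟩ := Int.even_mul_succ_self (b * c + 1)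
      have h2 : Even ((2 * b + 1) * (b * g * ((b * c + 1) * (b * c + 3)))) :=
        ⟨b * (b * c + 3) * k,
          by linear_combination (b * (b * c + 3)) * hk - (b * (b * c + 1) * (b * c + 3)) * hbe⟩
      rcases Int.even_mul.1 h2 with h | h
      · obtain ⟨k2, hk2⟩ := h; omega
      · exact h
    · refine ⟨b * g * ((b * c + 1) * (b * c + 2)),
        by linear_combination (b * c * (b * c + 1) * (b * c + 2)) * hbe, ?_⟩
      obtain ⟨k, hk⟩ := Int.even_mul_succ_self (b * c + 1)
      exact ⟨b * g * k, by linear_combination (b * g) * hk⟩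
  have hβ : b * c * (b * c + 1) * (b * c + 2) * (b * c + 3) / (c + 2 * (b * c)) = w := by
    rw [hw, Int.mul_ediv_cancel_left _ hdne]
  refine ⟨mul_pos hb hc, hc, ?_, ⟨b ^ 4 * c ^ 3 - b ^ 2 * c, by ring⟩, ⟨w, hw⟩, ?_⟩
  · nlinarith [mul_pos hb hc, mul_nonneg (by linarith : (0:ℤ) ≤ b - 1) hc.le,
      mul_pos (mul_pos hb hc) (mul_pos hb hc)]
  · rw [hβ, Int.even_iff.1 hαe, Int.even_iff.1 hwe]
end

section
/- Let b be a positive integer with b ≡ 1 or 7 (mod 9), set t = (2b+1)/3 (an integer), and let c be a positive integer congruent to 2, 4, or 6 modulo t (i.e., c = tf + 2e for some nonnegative integer f and some e ∈ {1,2,3}). Then the pair (q,c) with q = bc is feasible. -/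
/-- **Theorem 4(2).**  For a positive integer `b ≡ 1, 7 (mod 9)`, with
`t = (2b+1)/3`, and a positive integer `c = tf + 2e` for some nonnegative `f`
and `e ∈ {1,2,3}`, the pair `(bc, c)` is feasible. -/
theorem srnt_theorem4_part2 (b t c : ℤ) (hb : 0 < b)
    (hbmod : b % 9 = 1 ∨ b % 9 = 7) (ht : 2 * b + 1 = 3 * t) (hc : 0 < c)
    (hcong : ∃ f e : ℤ, 0 ≤ f ∧ (e = 1 ∨ e = 2 ∨ e = 3) ∧ c = t * f + 2 * e) :
    Feasible (b * c) c := by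
  obtain ⟨f, e, hf, he, hce⟩ := hcong
  have hq : 0 < b * c := mul_pos hb hc
  have htpos : 0 < t := by omega
  have ht3 : t % 3 = 1 ∨ t % 3 = 2 := by omega
  -- t divides b*c + e
  have htd : t ∣ b * c + e := ⟨b * f + 3 * e, by linear_combination b * hce + e * ht⟩
  set P : ℤ := (b * c + 1) * (b * c + 2) * (b * c + 3) with hP
  have h3P : (3 : ℤ) ∣ P := by
    obtain ⟨k, hk⟩ : ∃ k, b * c = 3 * k ∨ b * c = 3 * k + 1 ∨ b * c = 3 * k + 2 :=
      ⟨(b * c) / 3, by omega⟩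
    rcases hk with h | h | h
    · exact ⟨(b * c + 1) * (b * c + 2) * (k + 1), by rw [hP, h]; ring⟩
    · exact ⟨(b * c + 1) * (k + 1) * (b * c + 3), by rw [hP, h]; ring⟩
    · exact ⟨(k + 1) * (b * c + 2) * (b * c + 3), by rw [hP, h]; ring⟩
  have htP : t ∣ P := by
    refine htd.trans ?_
    rcases he with h | h | h <;> subst h
    · exact ⟨(b * c + 2) * (b * c + 3), by rw [hP]; ring⟩
    · exact ⟨(b * c + 1) * (b * c + 3), by rw [hP]; ring⟩
    · exact ⟨(b * c + 1) * (b * c + 2), by rw [hP]; ring⟩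
  have hcop : IsCoprime (3 : ℤ) t := by
    rcases ht3 with h | h
    · exact ⟨-(t / 3), 1, by omega⟩
    · exact ⟨t / 3 + 1, -1, by omega⟩
  obtain ⟨s, hs⟩ : 3 * t ∣ P := hcop.mul_dvd h3P htP
  have key : c + 2 * (b * c) = c * (3 * t) := by linear_combination c * ht
  have hkey0 : c * (3 * t) ≠ 0 := by positivity
  -- the quotient α
  have hA : ((b * c) ^ 4 - (b * c) ^ 2) / c = b * ((b * c - 1) * (b * c)) * (b * c + 1) := by
    rw [show (b * c) ^ 4 - (b * c) ^ 2 = c * (b * ((b * c - 1) * (b * c)) * (b * c + 1)) by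
      ring, Int.mul_ediv_cancel_left _ (ne_of_gt hc)]
  have hAe : Even (b * ((b * c - 1) * (b * c)) * (b * c + 1)) := by
    have h1 : Even ((b * c - 1) * (b * c)) := by
      have := Int.even_mul_succ_self (b * c - 1)
      simpa using this
    exact (h1.mul_left b).mul_right _
  -- the quotient β
  have hB : (b * c * (b * c + 1) * (b * c + 2) * (b * c + 3)) / (c + 2 * (b * c)) = b * s := by
    rw [key, show b * c * (b * c + 1) * (b * c + 2) * (b * c + 3) = c * (3 * t) * (b * s) by
      rw [hP] at hs; linear_combination b * c * hs, Int.mul_ediv_cancel_left _ hkey0]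
  have hBe : Even (b * s) := by
    have hPev : Even P := by
      have h1 : Even ((b * c + 1) * (b * c + 2)) := by
        have := Int.even_mul_succ_self (b * c + 1)
        simpa [add_assoc] using this
      exact h1.mul_right _
    have h2 : (2 : ℤ) ∣ 3 * t * (b * s) := by
      have : 3 * t * (b * s) = b * P := by linear_combination -b * hs
      rw [this]
      exact (hPev.mul_left b).two_dvd
    have hodd : ¬ (2 : ℤ) ∣ 3 * t := by omega
    rcases Int.prime_two.dvd_or_dvd h2 with h | h
    · exact absurd h hodd
    · exact (even_iff_two_dvd).mpr h
  refine ⟨hq, hc, ?_, ⟨b ^ 4 * c ^ 3 - b ^ 2 * c, by ring⟩, ⟨b * s, ?_⟩, ?_⟩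
  · nlinarith
  · rw [key]
    rw [hP] at hs
    linear_combination b * c * hs
  · rw [hA, hB, Int.even_iff.mp hAe, Int.even_iff.mp hBe]
end

section
/- For every integer q ≥ 2, each of the pairs (q, q), (q, q² − q), (q, q²), and (q, q² + q) is feasible. (For q = 1, the pairs (1,1) and (1,2), i.e., c = q = q² and c = q² + q, are feasible.) -/
lemma six_dvd_aux (a : ℤ) : (6:ℤ) ∣ a * (a + 1) * (a + 2) := by
  have h2 : (2:ℤ) ∣ a * (a + 1) * (a + 2) := by
    rcases Int.even_or_odd a with ⟨k, hk⟩ | ⟨k, hk⟩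
    · exact ⟨k * (a + 1) * (a + 2), by subst hk; ring⟩
    · exact ⟨a * (k + 1) * (a + 2), by subst hk; ring⟩
  have h3 : (3:ℤ) ∣ a * (a + 1) * (a + 2) := by
    have h : a % 3 = 0 ∨ a % 3 = 1 ∨ a % 3 = 2 := by omega
    rcases h with h | h | h
    · obtain ⟨k, hk⟩ : ∃ k, a = 3 * k := ⟨a / 3, by omega⟩
      exact ⟨k * (a + 1) * (a + 2), by subst hk; ring⟩
    · obtain ⟨k, hk⟩ : ∃ k, a = 3 * k + 1 := ⟨a / 3, by omega⟩
      exact ⟨a * (a + 1) * (k + 1), by subst hk; ring⟩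
    · obtain ⟨k, hk⟩ : ∃ k, a = 3 * k + 2 := ⟨a / 3, by omega⟩
      exact ⟨a * (k + 1) * (a + 2), by subst hk; ring⟩
  omega

/-- **Theorem 5.**  For every integer `q ≥ 2`, each of `(q, q)`, `(q, q²-q)`,
`(q, q²)`, `(q, q²+q)` is feasible; for `q = 1`, the pairs `(1,1)` and
`(1,2)` are feasible. -/
theorem srnt_theorem5 :
    (∀ q : ℤ, 2 ≤ q →
      Feasible q q ∧ Feasible q (q ^ 2 - q) ∧
      Feasible q (q ^ 2) ∧ Feasible q (q ^ 2 + q)) ∧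
    Feasible 1 1 ∧ Feasible 1 2 := by
  refine ⟨fun q hq => ?_, by norm_num [Feasible], by norm_num [Feasible]⟩
  have hq0 : (0:ℤ) < q := by omega
  have hqne : q ≠ 0 := by omega
  refine ⟨⟨hq0, by omega, by nlinarith, ⟨q ^ 3 - q, by ring⟩, ?_, ?_⟩,
          ⟨hq0, by nlinarith, by nlinarith, ⟨q ^ 2 + q, by ring⟩, ⟨(q+2)*(q+3), by ring⟩, ?_⟩,
          ⟨hq0, by nlinarith, by nlinarith, ⟨q ^ 2 - 1, by ring⟩, ⟨(q+1)*(q+3), by ring⟩, ?_⟩,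
          ⟨hq0, by nlinarith, by nlinarith, ⟨q ^ 2 - q, by ring⟩, ⟨(q+1)*(q+2), by ring⟩, ?_⟩⟩
  -- case c = q
  · obtain ⟨m, hm⟩ := six_dvd_aux (q + 1)
    exact ⟨2 * m, by linear_combination q * hm⟩
  · obtain ⟨m, hm⟩ := six_dvd_aux (q + 1)
    have h1 : (q ^ 4 - q ^ 2) / q = q ^ 3 - q := by
      rw [show q ^ 4 - q ^ 2 = q * (q ^ 3 - q) by ring, Int.mul_ediv_cancel_left _ hqne]
    have h2 : q * (q + 1) * (q + 2) * (q + 3) / (q + 2 * q) = 2 * m := by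
      rw [show q * (q + 1) * (q + 2) * (q + 3) = (q + 2 * q) * (2 * m) by
        linear_combination q * hm, Int.mul_ediv_cancel_left _ (by omega)]
    rw [h1, h2]
    obtain ⟨n, hn⟩ := six_dvd_aux (q - 1)
    have : q ^ 3 - q = 6 * n := by linear_combination hn
    omega
  -- case c = q² - q
  · have hc : q ^ 2 - q ≠ 0 := by nlinarith
    have h1 : (q ^ 4 - q ^ 2) / (q ^ 2 - q) = q ^ 2 + q := by
      rw [show q ^ 4 - q ^ 2 = (q ^ 2 - q) * (q ^ 2 + q) by ring,
        Int.mul_ediv_cancel_left _ hc]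
    have h2 : q * (q + 1) * (q + 2) * (q + 3) / (q ^ 2 - q + 2 * q) = (q + 2) * (q + 3) := by
      rw [show q * (q + 1) * (q + 2) * (q + 3) = (q ^ 2 - q + 2 * q) * ((q + 2) * (q + 3)) by
        ring, Int.mul_ediv_cancel_left _ (by nlinarith)]
    rw [h1, h2]
    obtain ⟨k, hk⟩ := Int.even_mul_succ_self q
    obtain ⟨l, hl⟩ := Int.even_mul_succ_self (q + 2)
    have e1 : q ^ 2 + q = 2 * k := by linear_combination hk
    have e2 : (q + 2) * (q + 3) = 2 * l := by linear_combination hl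
    omega
  -- case c = q²
  · have h1 : (q ^ 4 - q ^ 2) / q ^ 2 = q ^ 2 - 1 := by
      rw [show q ^ 4 - q ^ 2 = q ^ 2 * (q ^ 2 - 1) by ring,
        Int.mul_ediv_cancel_left _ (by positivity)]
    have h2 : q * (q + 1) * (q + 2) * (q + 3) / (q ^ 2 + 2 * q) = (q + 1) * (q + 3) := by
      rw [show q * (q + 1) * (q + 2) * (q + 3) = (q ^ 2 + 2 * q) * ((q + 1) * (q + 3)) by
        ring, Int.mul_ediv_cancel_left _ (by nlinarith)]
    rw [h1, h2, show (q + 1) * (q + 3) = q ^ 2 - 1 + 2 * (2 * q + 2) by ring]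
    generalize q ^ 2 - 1 = x
    omega
  -- case c = q² + q
  · have h1 : (q ^ 4 - q ^ 2) / (q ^ 2 + q) = q ^ 2 - q := by
      rw [show q ^ 4 - q ^ 2 = (q ^ 2 + q) * (q ^ 2 - q) by ring,
        Int.mul_ediv_cancel_left _ (by nlinarith)]
    have h2 : q * (q + 1) * (q + 2) * (q + 3) / (q ^ 2 + q + 2 * q) = (q + 1) * (q + 2) := by
      rw [show q * (q + 1) * (q + 2) * (q + 3) = (q ^ 2 + q + 2 * q) * ((q + 1) * (q + 2)) by
        ring, Int.mul_ediv_cancel_left _ (by nlinarith)]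
    rw [h1, h2]
    obtain ⟨k, hk⟩ := Int.even_mul_succ_self (q - 1)
    obtain ⟨l, hl⟩ := Int.even_mul_succ_self (q + 1)
    have e1 : q ^ 2 - q = 2 * k := by linear_combination hk
    have e2 : (q + 1) * (q + 2) = 2 * l := by linear_combination hl
    omega
end

section
/- For an integer q ≥ 2, the pair (q, q−1) is feasible if and only if q ∈ {2, 5, 7, 12, 47}. (Equivalently, using the identity 81·q(q+1)(q+2)(q+3) = (3q−1)(27q³ + 171q² + 354q + 280) + 280, feasibility of (q, q−1) forces β = q(q+1)(q+2)(q+3)/(3q−1) to be an even integer, which holds exactly for 3q−1 ∈ {5, 14, 20, 35, 140}.) -/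
namespace Feasible

theorem sub_one_iff {q : ℤ} (hq : 2 ≤ q) :
    Feasible q (q - 1) ↔ 2 * (3 * q - 1) ∣ q * (q + 1) * (q + 2) * (q + 3) := by
  have hα : (q ^ 4 - q ^ 2) / (q - 1) = q * (q * (q + 1)) := by
    rw [show q ^ 4 - q ^ 2 = (q - 1) * (q * (q * (q + 1))) by ring]
    exact Int.mul_ediv_cancel_left _ (by omega)
  have hα_even : q * (q * (q + 1)) % 2 = 0 :=
    Int.even_iff.mp ((Int.even_mul_succ_self q).mul_left q)
  rw [Feasible, hα, hα_even, show q - 1 + 2 * q = 3 * q - 1 by ring]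
  have hβ_even (hdvd : 3 * q - 1 ∣ q * (q + 1) * (q + 2) * (q + 3)) :
      0 = q * (q + 1) * (q + 2) * (q + 3) / (3 * q - 1) % 2 ↔
        2 * (3 * q - 1) ∣ q * (q + 1) * (q + 2) * (q + 3) := by
    rw [eq_comm, ← Int.dvd_iff_emod_eq_zero, Int.dvd_div_iff_mul_dvd hdvd, mul_comm]
  constructor
  · rintro ⟨-, -, -, -, hdvd, hβ⟩
    exact (hβ_even hdvd).mp hβ
  · intro h
    have hdvd := dvd_of_mul_left_dvd h
    exact ⟨by omega, by omega, by nlinarith, ⟨q * (q * (q + 1)), by ring⟩, hdvd,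
      (hβ_even hdvd).mpr h⟩

end Feasible

theorem three_mul_sub_one_dvd_280 {q : ℤ} (h : 3 * q - 1 ∣ q * (q + 1) * (q + 2) * (q + 3)) :
    3 * q - 1 ∣ 280 := by
  have hsub := (h.mul_left 81).sub
    (dvd_mul_right (3 * q - 1) (27 * q ^ 3 + 171 * q ^ 2 + 354 * q + 280))
  rwa [show 81 * (q * (q + 1) * (q + 2) * (q + 3)) -
      (3 * q - 1) * (27 * q ^ 3 + 171 * q ^ 2 + 354 * q + 280) = 280 by ring] at hsub

theorem eq_of_three_mul_sub_one_dvd_280 {q : ℤ} (hq : 2 ≤ q) (h : 3 * q - 1 ∣ 280) :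
    q = 2 ∨ q = 3 ∨ q = 5 ∨ q = 7 ∨ q = 12 ∨ q = 19 ∨ q = 47 := by
  have hq93 : q ≤ 93 := by have := Int.le_of_dvd (by norm_num) h; omega
  interval_cases q <;> omega

/-- **Theorem 6 (case `c = q - 1`).**  For `q ≥ 2`, the pair `(q, q-1)` is
feasible iff `q ∈ {2, 5, 7, 12, 47}`. -/
theorem srnt_theorem6_qminus1 (q : ℤ) (hq : 2 ≤ q) :
    Feasible q (q - 1) ↔ q = 2 ∨ q = 5 ∨ q = 7 ∨ q = 12 ∨ q = 47 := by
  rw [Feasible.sub_one_iff hq]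
  constructor
  · intro h
    have h280 := three_mul_sub_one_dvd_280 (dvd_of_mul_left_dvd h)
    rcases eq_of_three_mul_sub_one_dvd_280 hq h280 with rfl | rfl | rfl | rfl | rfl | rfl | rfl <;>
      omega
  · rintro (rfl | rfl | rfl | rfl | rfl) <;> norm_num
end

section
/- For a positive integer q, the pair (q, q+1) is feasible if and only if q ∈ {1, 3, 13}. (Equivalently, using the identity 81·q(q+1)(q+2)(q+3) = (3q+1)(27q³ + 153q² + 246q + 80) − 80, feasibility of (q, q+1) forces β = q(q+1)(q+2)(q+3)/(3q+1) to be an even integer, which holds exactly for 3q+1 ∈ {4, 10, 40}.) -/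
/-- **Theorem 6 (case `c = q + 1`).**  For a positive integer `q`, the pair
`(q, q+1)` is feasible iff `q ∈ {1, 3, 13}`. -/
theorem srnt_theorem6_qplus1 (q : ℤ) (hq : 0 < q) :
    Feasible q (q + 1) ↔ q = 1 ∨ q = 3 ∨ q = 13 := by
  constructor
  · rintro ⟨-, h1, h2, h3, h4, h5⟩
    have h4' : (3 * q + 1) ∣ q * (q + 1) * (q + 2) * (q + 3) := by
      have he : q + 1 + 2 * q = 3 * q + 1 := by ring
      rwa [he] at h4
    have hd : (3 * q + 1) ∣ 80 := by
      have h80 : (3 * q + 1) ∣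
          (3 * q + 1) * (27 * q ^ 3 + 153 * q ^ 2 + 246 * q + 80)
            - 81 * (q * (q + 1) * (q + 2) * (q + 3)) :=
        dvd_sub (Dvd.intro _ rfl) (Dvd.dvd.mul_left h4' 81)
      have he : (3 * q + 1) * (27 * q ^ 3 + 153 * q ^ 2 + 246 * q + 80)
            - 81 * (q * (q + 1) * (q + 2) * (q + 3)) = 80 := by ring
      rwa [he] at h80
    have hle : 3 * q + 1 ≤ 80 := Int.le_of_dvd (by norm_num) hd
    have h26 : q ≤ 26 := by omega
    interval_cases q <;> omega
  · rintro (rfl | rfl | rfl) <;> refine ⟨by norm_num, by norm_num, by norm_num, ?_, ?_, by norm_num⟩ <;> decide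
end

section
/- For every integer q ≥ 2, the pair (q, q² − 1) is not feasible. (Using the identity q(q+1)(q+2)(q+3) = (q² + 2q − 1)(q+2)² + (2q+4), feasibility would require q² + 2q − 1 to divide 2q + 4, which fails for all q ≥ 2.) -/
/-- **Theorem 6 (case `c = q² - 1`).**  For every integer `q ≥ 2`, the pair
`(q, q² - 1)` is not feasible. -/
theorem srnt_theorem6_qsq_minus1 (q : ℤ) (hq : 2 ≤ q) :
    ¬ Feasible q (q ^ 2 - 1) := by
  rintro ⟨hq0, h1, h2, h4, h5, h6⟩
  have hd : (q ^ 2 - 1 + 2 * q) ∣ 2 * q + 4 := by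
    have h7 : (q ^ 2 - 1 + 2 * q) ∣ (q ^ 2 - 1 + 2 * q) * (q + 2) ^ 2 :=
      Dvd.intro _ rfl
    have := h5.sub h7
    have heq : q * (q + 1) * (q + 2) * (q + 3) - (q ^ 2 - 1 + 2 * q) * (q + 2) ^ 2
        = 2 * q + 4 := by ring
    rwa [heq] at this
  have hle : q ^ 2 - 1 + 2 * q ≤ 2 * q + 4 :=
    Int.le_of_dvd (by linarith) hd
  have hq2 : q = 2 := by nlinarith
  subst hq2
  norm_num at hd
end

section
/- For every integer q ≥ 2 and every b ∈ {1,2}, if c = q(q−1)/b is an integer then the pair (q,c) is feasible; in particular, (q, q(q−1)/2) is feasible for all q ≥ 2. -/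
lemma feas_aux (q b c : ℤ) (hq : 2 ≤ q) (hb : b = 1 ∨ b = 2)
    (h : q * (q - 1) = b * c) : Feasible q c := by
  have hq0 : (0:ℤ) < q := by linarith
  rcases hb with hb | hb
  · subst hb
    have hc : c = q * (q - 1) := by linarith
    subst hc
    have hc1 : (1:ℤ) ≤ q * (q - 1) := by nlinarith
    have hcne : q * (q - 1) ≠ 0 := by positivity
    have hdne : q * (q - 1) + 2 * q ≠ 0 := by nlinarith
    refine ⟨hq0, hc1, by nlinarith, ⟨q * (q + 1), by ring⟩,
      ⟨(q + 2) * (q + 3), by ring⟩, ?_⟩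
    have e1 : q ^ 4 - q ^ 2 = (q * (q - 1)) * (q * (q + 1)) := by ring
    have e2 : q * (q + 1) * (q + 2) * (q + 3)
        = (q * (q - 1) + 2 * q) * ((q + 2) * (q + 3)) := by ring
    rw [e1, e2, Int.mul_ediv_cancel_left _ hcne, Int.mul_ediv_cancel_left _ hdne]
    have ha : ((q * (q + 1)) % 2) = 0 := Int.even_iff.mp (Int.even_mul_succ_self q)
    have hbeta : (((q + 2) * (q + 3)) % 2) = 0 := by
      have := Int.even_mul_succ_self (q + 2)
      simpa [show (q + 2) + 1 = q + 3 by ring] using Int.even_iff.mp this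
    rw [ha, hbeta]
  · subst hb
    have hc1 : (1:ℤ) ≤ c := by nlinarith
    have hcne : c ≠ 0 := by linarith
    have hdne : c + 2 * q ≠ 0 := by linarith
    refine ⟨hq0, hc1, by nlinarith, ⟨2 * (q * (q + 1)), by linear_combination (q * (q + 1)) * h⟩,
      ⟨2 * ((q + 1) * (q + 2)), by linear_combination ((q + 1) * (q + 2)) * h⟩, ?_⟩
    have e1 : q ^ 4 - q ^ 2 = c * (2 * (q * (q + 1))) := by linear_combination (q * (q + 1)) * h
    have e2 : q * (q + 1) * (q + 2) * (q + 3)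
        = (c + 2 * q) * (2 * ((q + 1) * (q + 2))) := by linear_combination ((q + 1) * (q + 2)) * h
    rw [e1, e2, Int.mul_ediv_cancel_left _ hcne, Int.mul_ediv_cancel_left _ hdne]
    omega

/-- For every `q ≥ 2` the pair `(q, q(q-1)/2)` is feasible; more generally,
for `b ∈ {1, 2}`, if `c = q(q-1)/b` is an integer then `(q, c)` is feasible. -/
theorem srnt_half_family :
    (∀ q : ℤ, 2 ≤ q → Feasible q (q * (q - 1) / 2)) ∧
    (∀ q b c : ℤ, 2 ≤ q → (b = 1 ∨ b = 2) → q * (q - 1) = b * c →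
      Feasible q c) := by
  constructor
  · intro q hq
    apply feas_aux q 2 _ hq (Or.inr rfl)
    have h2 : (2:ℤ) ∣ q * (q - 1) := by
      have := Int.even_mul_succ_self (q - 1)
      have : Even (q * (q - 1)) := by
        simpa [show (q - 1) + 1 = q by ring, mul_comm] using this
      exact this.two_dvd
    exact (Int.mul_ediv_cancel' h2).symm
  · intro q b c hq hb h
    exact feas_aux q b c hq hb h
end

section
/- Let q be a positive integer with q ∉ {2, 4, 5, 6, 7, 8, 12, 47}. Then for every feasible pair (q,c), the number n_q(c) = (q+1)(q+2)·c + (2q³ + 3q² − q) + (q⁴ − q²)/c satisfies n_q(c) ≥ 4q³ + 6q². Moreover the bound is attained: (q,q) is feasible and n_q(q) = 4q³ + 6q². -/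
/-- The number of vertices `n_q(c) = (q+1)(q+2)c + (2q³ + 3q² - q) + (q⁴ - q²)/c`. -/
def nq (q c : ℤ) : ℤ :=
  (q + 1) * (q + 2) * c + (2 * q ^ 3 + 3 * q ^ 2 - q) + (q ^ 4 - q ^ 2) / c

lemma Int.six_dvd_mul_add_one_mul_add_two (n : ℤ) : 6 ∣ n * (n + 1) * (n + 2) := by
  have h : n % 6 = 0 ∨ n % 6 = 1 ∨ n % 6 = 2 ∨ n % 6 = 3 ∨ n % 6 = 4 ∨ n % 6 = 5 := by
    omega
  rw [Int.dvd_iff_emod_eq_zero]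
  rcases h with h | h | h | h | h | h <;> simp [h, Int.mul_emod, Int.add_emod]

lemma mul_nq_sub (q c : ℤ) (hc : c ≠ 0) (hdvd : c ∣ q ^ 4 - q ^ 2) :
    c * (nq q c - (4 * q ^ 3 + 6 * q ^ 2)) =
      (c - q) * ((q + 1) * (q + 2) * c - (q ^ 3 - q)) := by
  obtain ⟨α, hα⟩ := hdvd
  rw [nq, hα, Int.mul_ediv_cancel_left _ hc]
  linear_combination -hα

lemma le_nq_of_ne_sub_one_of_ne_sub_two {q c : ℤ} (hq : 0 < q) (hc : 0 < c)
    (hdvd : c ∣ q ^ 4 - q ^ 2) (hc₁ : c ≠ q - 1) (hc₂ : c ≠ q - 2) :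
    4 * q ^ 3 + 6 * q ^ 2 ≤ nq q c := by
  have hprod : 0 ≤ (c - q) * ((q + 1) * (q + 2) * c - (q ^ 3 - q)) := by
    rcases le_or_gt q c with h | h
    · have : (q + 1) * (q + 2) * q ≤ (q + 1) * (q + 2) * c := by gcongr
      exact mul_nonneg (by omega) (by nlinarith)
    · have : (q + 1) * (q + 2) * c ≤ (q + 1) * (q + 2) * (q - 3) := by gcongr; omega
      exact mul_nonneg_of_nonpos_of_nonpos (by omega) (by nlinarith)
  rw [← mul_nq_sub q c hc.ne' hdvd] at hprod
  linarith [nonneg_of_mul_nonneg_right hprod hc]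

lemma mem_of_feasible_sub_one {q : ℤ} (h : Feasible q (q - 1)) :
    q ∈ ({2, 5, 7, 12, 47} : Set ℤ) := by
  obtain ⟨-, hc, -, -, ⟨k, hk⟩, hpar⟩ := h
  -- `3q ≡ 1 [ZMOD 3q - 1]` turns `81 q(q+1)(q+2)(q+3)` into `1 · 4 · 7 · 10 = 280`.
  have h280 : 3 * q - 1 ∣ 280 :=
    ⟨81 * k - (27 * q ^ 3 + 171 * q ^ 2 + 354 * q + 280), by linear_combination 81 * hk⟩
  have hq93 : q ≤ 93 := by linarith [Int.le_of_dvd (by norm_num) h280]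
  have hq2 : 2 ≤ q := by omega
  interval_cases q <;> revert h280 hpar <;> norm_num

lemma mem_of_feasible_sub_two {q : ℤ} (h : Feasible q (q - 2)) :
    q ∈ ({4, 6, 8} : Set ℤ) := by
  obtain ⟨-, hc, -, ⟨j, hj⟩, ⟨k, hk⟩, hpar⟩ := h
  -- Likewise `q ≡ 2 [ZMOD q - 2]` gives `2⁴ - 2² = 12`,
  -- and `3q ≡ 2 [ZMOD 3q - 2]` gives `2 · 5 · 8 · 11 = 880`.
  have h12 : q - 2 ∣ 12 := ⟨j - (q ^ 3 + 2 * q ^ 2 + 3 * q + 6), by linear_combination hj⟩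
  have h880 : 3 * q - 2 ∣ 880 :=
    ⟨81 * k - (27 * q ^ 3 + 180 * q ^ 2 + 417 * q + 440), by linear_combination 81 * hk⟩
  have hq14 : q ≤ 14 := by linarith [Int.le_of_dvd (by norm_num) h12]
  have hq3 : 3 ≤ q := by omega
  interval_cases q <;> revert h12 h880 hpar <;> norm_num

lemma feasible_self {q : ℤ} (hq : 0 < q) : Feasible q q := by
  obtain ⟨a, ha⟩ := Int.six_dvd_mul_add_one_mul_add_two (q - 1)
  obtain ⟨b, hb⟩ := Int.six_dvd_mul_add_one_mul_add_two (q + 1)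
  have hα : q ^ 4 - q ^ 2 = q * (6 * a) := by linear_combination q * ha
  have hβ : q * (q + 1) * (q + 2) * (q + 3) = (q + 2 * q) * (2 * b) := by
    linear_combination q * hb
  refine ⟨hq, hq, by nlinarith, ⟨_, hα⟩, ⟨_, hβ⟩, ?_⟩
  rw [hα, hβ, Int.mul_ediv_cancel_left _ hq.ne', Int.mul_ediv_cancel_left _ (by omega)]
  omega

lemma nq_self {q : ℤ} (hq : q ≠ 0) : nq q q = 4 * q ^ 3 + 6 * q ^ 2 := by
  have h := mul_nq_sub q q hq ⟨q ^ 3 - q, by ring⟩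
  rw [sub_self, zero_mul, mul_eq_zero] at h
  exact sub_eq_zero.mp (h.resolve_left hq)

/-- **Theorem 7 (generic lower bound).**  For a positive integer
`q ∉ {2,4,5,6,7,8,12,47}`, every feasible pair `(q,c)` has
`n_q(c) ≥ 4q³ + 6q²`, and the bound is attained at `c = q`. -/
theorem srnt_theorem7_lower (q : ℤ) (hq : 0 < q)
    (hex : q ∉ ({2, 4, 5, 6, 7, 8, 12, 47} : Set ℤ)) :
    (∀ c : ℤ, Feasible q c → 4 * q ^ 3 + 6 * q ^ 2 ≤ nq q c) ∧
    Feasible q q ∧ nq q q = 4 * q ^ 3 + 6 * q ^ 2 := by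
  refine ⟨fun c hc ↦ ?_, feasible_self hq, nq_self hq.ne'⟩
  have hc₁ : c ≠ q - 1 := fun h ↦ hex <| by
    rcases mem_of_feasible_sub_one (h ▸ hc) with rfl | rfl | rfl | rfl | rfl <;> simp
  have hc₂ : c ≠ q - 2 := fun h ↦ hex <| by
    rcases mem_of_feasible_sub_two (h ▸ hc) with rfl | rfl | rfl <;> simp
  obtain ⟨-, hc_pos, -, hdvd, -, -⟩ := hc
  exact le_nq_of_ne_sub_one_of_ne_sub_two hq hc_pos hdvd hc₁ hc₂
end

section
/- Let q be a positive integer. Then for every feasible pair (q,c), the number n_q(c) = (q+1)(q+2)·c + (2q³ + 3q² − q) + (q⁴ − q²)/c satisfies n_q(c) ≤ q²(q+3)². Moreover the bound is attained: (q, q(q+1)) is feasible and n_q(q(q+1)) = q²(q+3)². -/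
lemma aux_div1 (q : ℤ) (hq : 0 < q) :
    (q ^ 4 - q ^ 2) / (q * (q + 1)) = q ^ 2 - q := by
  have h : q ^ 4 - q ^ 2 = (q * (q + 1)) * (q ^ 2 - q) := by ring
  rw [h, Int.mul_ediv_cancel_left]
  positivity

lemma aux_div2 (q : ℤ) (hq : 0 < q) :
    q * (q + 1) * (q + 2) * (q + 3) / (q * (q + 1) + 2 * q) = q ^ 2 + 3 * q + 2 := by
  have h : q * (q + 1) * (q + 2) * (q + 3) = (q * (q + 1) + 2 * q) * (q ^ 2 + 3 * q + 2) := by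
    ring
  rw [h, Int.mul_ediv_cancel_left]
  nlinarith

/-- **Theorem 7 (upper bound).**  For every positive integer `q`, every
feasible pair `(q,c)` has `n_q(c) ≤ q²(q+3)²`, and the bound is attained at
`c = q(q+1)`. -/
theorem srnt_theorem7_upper (q : ℤ) (hq : 0 < q) :
    (∀ c : ℤ, Feasible q c → nq q c ≤ q ^ 2 * (q + 3) ^ 2) ∧
    Feasible q (q * (q + 1)) ∧ nq q (q * (q + 1)) = q ^ 2 * (q + 3) ^ 2 := by
  refine ⟨?_, ⟨hq, by nlinarith, le_refl _, ⟨q ^ 2 - q, by ring⟩,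
      ⟨q ^ 2 + 3 * q + 2, by ring⟩, ?_⟩, ?_⟩
  · intro c ⟨_, hc1, hc2, hdvd, _, _⟩
    obtain ⟨a, ha⟩ := hdvd
    have hc0 : 0 < c := by omega
    have hα : (q ^ 4 - q ^ 2) / c = a := by
      rw [ha, Int.mul_ediv_cancel_left _ (by omega)]
    unfold nq
    rw [hα]
    have key : (q * (q + 1) - c) * ((q + 1) * (q + 2) * c - q * (q - 1)) ≥ 0 := by
      apply mul_nonneg (by omega)
      nlinarith
    have h2 : c * ((q + 1) * (q + 2) * c + (2 * q ^ 3 + 3 * q ^ 2 - q) + a)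
        ≤ c * (q ^ 2 * (q + 3) ^ 2) := by nlinarith
    exact le_of_mul_le_mul_left h2 hc0
  · rw [aux_div1 q hq, aux_div2 q hq]
    have h : q ^ 2 + 3 * q + 2 = (q ^ 2 - q) + 2 * (2 * q + 1) := by ring
    rw [h, Int.add_mul_emod_self_left]
  · unfold nq
    rw [aux_div1 q hq]
    ring
end

section
/- Let q ∈ {2, 5, 7, 12, 47}. Then for every feasible pair (q,c), the number n_q(c) = (q+1)(q+2)·c + (2q³ + 3q² − q) + (q⁴ − q²)/c satisfies n_q(c) ≥ 4q³ + 6q² − 2(q+1). Moreover the bound is attained: (q, q−1) is feasible and n_q(q−1) = 4q³ + 6q² − 2q − 2. -/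
/-!
Clearing the denominator `c`, the excess `n_q(c) - (4q³ + 6q² - 2q - 2)` becomes
`(q+1)(c - (q-1))((q+2)c - q²) / c`. The quadratic's roots `q - 1` and `q²/(q+2)` both lie in
`(q-2, q]`, so no integer lies strictly between them: the excess is nonnegative for every positive
divisor `c` of `q⁴ - q²`, and it vanishes at `c = q - 1`.
-/

theorem mul_nq_sub_eq {q c : ℤ} (hc : c ∣ q ^ 4 - q ^ 2) :
    c * (nq q c - (4 * q ^ 3 + 6 * q ^ 2 - 2 * q - 2)) =
      (q + 1) * ((c - (q - 1)) * ((q + 2) * c - q ^ 2)) := by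
  have hcd : c * ((q ^ 4 - q ^ 2) / c) = q ^ 4 - q ^ 2 := Int.mul_ediv_cancel' hc
  unfold nq
  linear_combination hcd

theorem sub_mul_sub_nonneg {q c : ℤ} (hq : 0 ≤ q) :
    0 ≤ (c - (q - 1)) * ((q + 2) * c - q ^ 2) := by
  rcases lt_trichotomy c (q - 1) with hlt | rfl | hgt
  · have hneg : (q + 2) * c - q ^ 2 ≤ 0 := by nlinarith
    nlinarith
  · simp
  · have hpos : 0 ≤ (q + 2) * c - q ^ 2 := by nlinarith
    nlinarith

theorem le_nq_of_dvd {q c : ℤ} (hq : 0 ≤ q) (hc : 0 < c) (hdvd : c ∣ q ^ 4 - q ^ 2) :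
    4 * q ^ 3 + 6 * q ^ 2 - 2 * q - 2 ≤ nq q c := by
  have hprod : 0 ≤ c * (nq q c - (4 * q ^ 3 + 6 * q ^ 2 - 2 * q - 2)) := by
    rw [mul_nq_sub_eq hdvd]
    exact mul_nonneg (by linarith) (sub_mul_sub_nonneg hq)
  linarith [nonneg_of_mul_nonneg_right hprod hc]

theorem nq_sub_one {q : ℤ} (hq : q ≠ 1) : nq q (q - 1) = 4 * q ^ 3 + 6 * q ^ 2 - 2 * q - 2 := by
  have hdvd : q - 1 ∣ q ^ 4 - q ^ 2 := ⟨q ^ 2 * (q + 1), by ring⟩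
  have hzero := mul_nq_sub_eq hdvd
  rw [sub_self, zero_mul, mul_zero, mul_eq_zero, sub_eq_zero, sub_eq_zero] at hzero
  exact hzero.resolve_left hq

theorem Feasible.le_nq {q c : ℤ} (h : Feasible q c) :
    4 * q ^ 3 + 6 * q ^ 2 - 2 * q - 2 ≤ nq q c :=
  le_nq_of_dvd h.1.le h.2.1 h.2.2.2.1

/-- **Theorem 7 (exceptional cases `q = 2, 5, 7, 12, 47`).**  Every feasible pair
`(q,c)` has `n_q(c) ≥ 4q³ + 6q² - 2(q+1)`, and the bound is attained at
`c = q - 1`. -/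
theorem srnt_theorem7_exceptional1 (q : ℤ)
    (hq : q = 2 ∨ q = 5 ∨ q = 7 ∨ q = 12 ∨ q = 47) :
    (∀ c : ℤ, Feasible q c → 4 * q ^ 3 + 6 * q ^ 2 - 2 * (q + 1) ≤ nq q c) ∧
    Feasible q (q - 1) ∧ nq q (q - 1) = 4 * q ^ 3 + 6 * q ^ 2 - 2 * q - 2 := by
  -- Since `3q ≡ 1 [ZMOD 3q - 1]`, feasibility of `(q, q - 1)` forces `3q - 1 ∣ 1·4·7·10 = 280`.
  have hfeas : Feasible q (q - 1) := by
    rcases hq with rfl | rfl | rfl | rfl | rfl <;> unfold Feasible <;> decide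
  refine ⟨fun c hc => ?_, hfeas, nq_sub_one (by omega)⟩
  linarith [hc.le_nq]
end

section
/- Let q and c be positive integers, set k = c(q+1) + q² and ℓ = k(k−1)/c (as a rational number). Define the rational numbers x = (q+1)(q² + qc + c)(q² + 2qc + c² − 2c − q) / (c(c+2q)), y = q² + qc + c − 1, and z = (q+c−1)(q² + qc + c)(q² + q − c) / (c(c+2q)). Then (x, y, z) is the unique rational solution of the system of equations: 1 + x + y + z = ℓ; q(q+c) + q·x − c·y − (q+c)·z = 0; and q²(q+c)² + q²·x + c²·y + (q+c)²·z = ℓ(k−c). Moreover this solution also satisfies q³(q+c)³ + q³·x − c³·y − (q+c)³·z = 0. -/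
/-- **Section 6.**  For positive integers `q, c`, with `k = c(q+1) + q²` and
`ℓ = k(k-1)/c`, the rational numbers
`x = (q+1)(q² + qc + c)(q² + 2qc + c² - 2c - q)/(c(c+2q))`,
`y = q² + qc + c - 1`, and
`z = (q+c-1)(q² + qc + c)(q² + q - c)/(c(c+2q))`
form the unique rational solution of the spectral equations `S₀ = ℓ`, `S₁ = 0`,
`S₂ = ℓ(k-c)` for the second subconstituent, and this solution also satisfies
`S₃ = 0`. -/
theorem srnt_second_subconstituent (q c : ℤ) (hq : 0 < q) (hc : 0 < c)
    (k ℓ x y z : ℚ)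
    (hk : k = c * (q + 1) + q ^ 2)
    (hl : ℓ = k * (k - 1) / c)
    (hx : x = (q + 1) * (q ^ 2 + q * c + c) *
      (q ^ 2 + 2 * q * c + c ^ 2 - 2 * c - q) / (c * (c + 2 * q)))
    (hy : y = q ^ 2 + q * c + c - 1)
    (hz : z = (q + c - 1) * (q ^ 2 + q * c + c) * (q ^ 2 + q - c) /
      (c * (c + 2 * q))) :
    (∀ x' y' z' : ℚ,
      (1 + x' + y' + z' = ℓ ∧
       q * (q + c) + q * x' - c * y' - (q + c) * z' = 0 ∧
       q ^ 2 * (q + c) ^ 2 + q ^ 2 * x' + c ^ 2 * y' + (q + c) ^ 2 * z' =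
         ℓ * (k - c))
      ↔ (x' = x ∧ y' = y ∧ z' = z)) ∧
    q ^ 3 * (q + c) ^ 3 + q ^ 3 * x - c ^ 3 * y - (q + c) ^ 3 * z = 0 := by
  have hcq : (0:ℚ) < (c:ℚ) := by exact_mod_cast hc
  have hqq : (0:ℚ) < (q:ℚ) := by exact_mod_cast hq
  have hc0 : (c:ℚ) ≠ 0 := ne_of_gt hcq
  have hd0 : ((c:ℚ) * (c + 2 * q)) ≠ 0 := by positivity
  have hqc : ((q:ℚ) + c) ≠ 0 := by positivity
  have h2qc : (2 * (q:ℚ) + c) ≠ 0 := by positivity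
  have sat0 : 1 + x + y + z = ℓ := by
    rw [hx, hy, hz, hl, hk]; field_simp; ring
  have sat1 : (q:ℚ) * (q + c) + q * x - c * y - (q + c) * z = 0 := by
    rw [hx, hy, hz]; field_simp; ring
  have sat2 : (q:ℚ) ^ 2 * (q + c) ^ 2 + q ^ 2 * x + c ^ 2 * y + (q + c) ^ 2 * z =
      ℓ * (k - c) := by
    rw [hx, hy, hz, hl, hk]; field_simp; ring
  constructor
  · intro x' y' z'
    constructor
    · rintro ⟨e0, e1, e2⟩
      have hu : ((q:ℚ) + c) * (2 * q + c) * (x' - x) = 0 := by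
        linear_combination (c * ((q:ℚ) + c)) * e0 - (c * ((q:ℚ) + c)) * sat0 +
          ((q:ℚ) + 2 * c) * e1 - ((q:ℚ) + 2 * c) * sat1 + e2 - sat2
      have hv : (-(q:ℚ) * (q + c)) * (y' - y) = 0 := by
        linear_combination (-(q:ℚ) * (q + c)) * e0 + ((q:ℚ) * (q + c)) * sat0 +
          (c:ℚ) * e1 - (c:ℚ) * sat1 + e2 - sat2
      have hw : ((q:ℚ) * (2 * q + c)) * (z' - z) = 0 := by
        linear_combination (-(q:ℚ) * c) * e0 + ((q:ℚ) * c) * sat0 +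
          ((c:ℚ) - q) * e1 - ((c:ℚ) - q) * sat1 + e2 - sat2
      have h1 : x' = x := by
        have := mul_eq_zero.1 hu
        rcases this with h | h
        · exact absurd h (by positivity)
        · linarith [sub_eq_zero.1 h]
      have h2 : y' = y := by
        rcases mul_eq_zero.1 hv with h | h
        · exact absurd h (by
            have : (0:ℚ) < (q:ℚ) * (q + c) := by positivity
            intro h'; nlinarith)
        · linarith [sub_eq_zero.1 h]
      have h3 : z' = z := by
        rcases mul_eq_zero.1 hw with h | h
        · exact absurd h (by positivity)
        · linarith [sub_eq_zero.1 h]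
      exact ⟨h1, h2, h3⟩
    · rintro ⟨rfl, rfl, rfl⟩
      exact ⟨sat0, sat1, sat2⟩
  · rw [hx, hy, hz]; field_simp; ring
end
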